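/- arXiv:math/9905147 — 8 statements merged into one kernel-verified Lean document; each statement's English description precedes it below -/
import Mathlib

section
/- The following four conditions are equivalent: (i) there exists a Baire sup-measurable function F : ℝ × ℝ → ℝ which does not have the Baire property; (ii) there exists a function F : ℝ × ℝ → ℝ which does not have the Baire property such that for every Borel measurable f : ℝ → ℝ the function x ↦ F(x, f(x)) has the Baire property; (iii) there exists a set A ⊆ ℝ × ℝ which does not have the Baire property such that for every Borel measurable f : ℝ → ℝ the set {x ∈ ℝ : (x, f(x)) ∈ A} has the Baire property; (iv) there exists a Baire sup-measurable function F : ℝ × ℝ → ℝ taking only the values 0 and 1 which does not have the Baire property. -/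
open scoped symmDiff

/-- A set has the Baire property if it equals the symmetric difference of an
open set and a meager set. -/
def HasBaireProperty {X : Type*} [TopologicalSpace X] (S : Set X) : Prop :=
  ∃ U M : Set X, IsOpen U ∧ IsMeagre M ∧ S = U ∆ M

/-- A function has the Baire property if the preimage of every open set has
the Baire property. -/
def BaireFunction {X Y : Type*} [TopologicalSpace X] [TopologicalSpace Y] (g : X → Y) : Prop :=
  ∀ U : Set Y, IsOpen U → HasBaireProperty (g ⁻¹' U)

/-- `F : ℝ × ℝ → ℝ` is Baire sup-measurable if for every `f : ℝ → ℝ` with the Baire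
property, the function `x ↦ F (x, f x)` has the Baire property. -/
def BaireSupMeasurable (F : ℝ × ℝ → ℝ) : Prop :=
  ∀ f : ℝ → ℝ, BaireFunction f → BaireFunction (fun x => F (x, f x))

/-! The only substantial implication is (iii) ⇒ (iv), witnessed by the indicator of `A`: a
function with the Baire property agrees with a Borel function off a meagre set (approximate the
preimages of a countable basis by open sets modulo meagre sets), so each section of `A` along it
differs from a section along a Borel function by a meagre set. -/

open Topology Filter Set

section BaireProperty

variable {X : Type*} [TopologicalSpace X] {s t : Set X}

theorem hasBaireProperty_iff_baireMeasurableSet :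
    HasBaireProperty s ↔ BaireMeasurableSet s := by
  constructor
  · rintro ⟨U, M, hU, hM, rfl⟩
    rw [symmDiff_def]
    exact (hU.baireMeasurableSet.diff hM.baireMeasurableSet).union
      (hM.baireMeasurableSet.diff hU.baireMeasurableSet)
  · intro h
    obtain ⟨u, hu, hsu⟩ := h.residualEq_isOpen
    refine ⟨u, s ∆ u, hu, ?_, by rw [symmDiff_comm s u, symmDiff_symmDiff_cancel_left]⟩
    rw [IsMeagre]
    filter_upwards [eventuallyEq_set.1 hsu] with x hx
    simp only [mem_compl_iff, mem_symmDiff]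
    tauto

theorem HasBaireProperty.congr (hs : HasBaireProperty s) (hst : s =ᵇ t) :
    HasBaireProperty t := by
  rw [hasBaireProperty_iff_baireMeasurableSet] at hs ⊢
  exact hs.congr hst

theorem baireFunction_indicator_one_iff {M : Type*} [TopologicalSpace M] [Zero M] [One M]
    [NeZero (1 : M)] [T1Space M] :
    BaireFunction (s.indicator (1 : X → M)) ↔ HasBaireProperty s := by
  refine ⟨fun h => ?_, fun h U _ => ?_⟩
  · have hs : s.indicator (1 : X → M) ⁻¹' {0}ᶜ = s := by
      ext x
      by_cases hx : x ∈ s <;> simp [hx]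
    exact hs ▸ h {0}ᶜ isOpen_compl_singleton
  · rw [hasBaireProperty_iff_baireMeasurableSet] at h ⊢
    rcases indicator_one_preimage s U with hU | hU | hU | hU <;> rw [hU]
    · exact isOpen_univ.baireMeasurableSet
    · exact h
    · exact h.compl
    · exact isOpen_empty.baireMeasurableSet

theorem exists_isGδ_subset_mem_residual (hs : s ∈ residual X) :
    ∃ t ⊆ s, IsGδ t ∧ t ∈ residual X := by
  obtain ⟨S, hSo, hSd, hSc, hSs⟩ := mem_residual_iff.1 hs
  exact ⟨⋂₀ S, hSs, ⟨S, hSo, hSc, rfl⟩,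
    (countable_sInter_mem hSc).2 fun t ht => residual_of_dense_open (hSo t ht) (hSd t ht)⟩

end BaireProperty

section BaireFunction

variable {X Y : Type*} [TopologicalSpace X] [MeasurableSpace X] [BorelSpace X]
  [TopologicalSpace Y] [MeasurableSpace Y] [BorelSpace Y]

theorem Measurable.baireFunction {f : X → Y} (hf : Measurable f) : BaireFunction f :=
  fun _ hU => hasBaireProperty_iff_baireMeasurableSet.2
    (hf hU.measurableSet).baireMeasurableSet

theorem BaireFunction.exists_measurable_eventuallyEq [SecondCountableTopology Y] [Nonempty Y]
    {f : X → Y} (hf : BaireFunction f) : ∃ g : X → Y, Measurable g ∧ f =ᶠ[residual X] g := by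
  classical
  obtain ⟨B, hBc, -, hB⟩ := TopologicalSpace.exists_countable_basis Y
  have hu : ∀ b ∈ B, ∃ u : Set X, IsOpen u ∧ f ⁻¹' b =ᵇ u := fun b hb =>
    (hasBaireProperty_iff_baireMeasurableSet.1 (hf b (hB.isOpen hb))).residualEq_isOpen
  choose! u hu hfu using hu
  have hres : (⋂ b ∈ B, {x | f x ∈ b ↔ x ∈ u b}) ∈ residual X :=
    (countable_bInter_mem hBc).2 fun b hb => eventuallyEq_set.1 (hfu b hb)
  obtain ⟨t, hts, htGδ, ht⟩ := exists_isGδ_subset_mem_residual hres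
  obtain ⟨y₀⟩ := ‹Nonempty Y›
  refine ⟨t.piecewise f fun _ => y₀, ?_, ?_⟩
  · rw [‹BorelSpace Y›.measurable_eq, hB.borel_eq_generateFrom]
    refine measurable_generateFrom fun b hb => ?_
    have hpre : t.piecewise f (fun _ => y₀) ⁻¹' b = t.ite (u b) {_x | y₀ ∈ b} := by
      ext x
      by_cases hx : x ∈ t
      · simpa [Set.ite, hx] using mem_iInter₂.1 (hts hx) b hb
      · simp [Set.ite, hx]
    rw [hpre]
    exact htGδ.measurableSet.ite (hu b hb).measurableSet (.const _)
  · filter_upwards [ht] with x hx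
    simp [hx]

end BaireFunction

theorem baireSupMeasurable_indicator_one {A : Set (ℝ × ℝ)}
    (hA : ∀ f : ℝ → ℝ, Measurable f → HasBaireProperty {x : ℝ | (x, f x) ∈ A}) :
    BaireSupMeasurable (A.indicator 1) := by
  intro f hf
  obtain ⟨g, hg, hfg⟩ := hf.exists_measurable_eventuallyEq
  have hsec : HasBaireProperty {x : ℝ | (x, f x) ∈ A} :=
    (hA g hg).congr <| by
      filter_upwards [hfg] with x hx
      change ((x, g x) ∈ A) = ((x, f x) ∈ A)
      rw [hx]
  exact baireFunction_indicator_one_iff.2 hsec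

theorem stmt_0 : List.TFAE
    [ -- (i) a Baire sup-measurable function without the Baire property
      ∃ F : ℝ × ℝ → ℝ, BaireSupMeasurable F ∧ ¬ BaireFunction F,
      -- (ii) a function without the Baire property whose superpositions with
      -- Borel measurable functions have the Baire property
      ∃ F : ℝ × ℝ → ℝ, ¬ BaireFunction F ∧
        ∀ f : ℝ → ℝ, Measurable f → BaireFunction (fun x => F (x, f x)),
      -- (iii) a set without the Baire property whose sections along Borel
      -- measurable functions have the Baire property
      ∃ A : Set (ℝ × ℝ), ¬ HasBaireProperty A ∧
        ∀ f : ℝ → ℝ, Measurable f → HasBaireProperty {x : ℝ | (x, f x) ∈ A},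
      -- (iv) a {0,1}-valued Baire sup-measurable function without the Baire property
      ∃ F : ℝ × ℝ → ℝ, (∀ p : ℝ × ℝ, F p = 0 ∨ F p = 1) ∧
        BaireSupMeasurable F ∧ ¬ BaireFunction F ] := by
  tfae_have 1 → 2
  | ⟨F, hsup, hF⟩ => ⟨F, hF, fun f hf => hsup f hf.baireFunction⟩
  tfae_have 2 → 3 := by
    rintro ⟨F, hF, hsec⟩
    obtain ⟨U, hU, hFU⟩ : ∃ U, IsOpen U ∧ ¬ HasBaireProperty (F ⁻¹' U) := by
      simpa [BaireFunction] using hF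
    exact ⟨F ⁻¹' U, hFU, fun f hf => hsec f hf U hU⟩
  tfae_have 3 → 4
  | ⟨A, hA, hsec⟩ =>
    ⟨A.indicator 1, fun p => by by_cases hp : p ∈ A <;> simp [hp],
      baireSupMeasurable_indicator_one hsec, baireFunction_indicator_one_iff.not.2 hA⟩
  tfae_have 4 → 1
  | ⟨F, _, hsup, hF⟩ => ⟨F, hsup, hF⟩
  tfae_finish
end

section
/- A function F : ℝ × ℝ → ℝ is Baire sup-measurable if and only if for every Borel measurable function f : ℝ → ℝ the function x ↦ F(x, f(x)) has the Baire property. -/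
open scoped symmDiff

open Topology Filter Set

/-- Having the Baire property is the same as being a `BaireMeasurableSet`. -/
lemma hbp_iff_bms {X : Type*} [TopologicalSpace X] (S : Set X) :
    HasBaireProperty S ↔ BaireMeasurableSet S := by
  constructor
  · rintro ⟨U, M, hU, hM, rfl⟩
    rw [Set.symmDiff_def]
    exact (hU.baireMeasurableSet.diff hM.baireMeasurableSet).union
      (hM.baireMeasurableSet.diff hU.baireMeasurableSet)
  · intro h
    obtain ⟨u, hu, hsu⟩ := h.residualEq_isOpen
    refine ⟨u, S ∆ u, hu, ?_, ?_⟩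
    · rw [IsMeagre]
      have : (S ∆ u)ᶜ = {x | x ∈ S ↔ x ∈ u} := by
        ext x; simp [Set.symmDiff_def]; tauto
      rw [this]
      exact Filter.eventuallyEq_set.mp hsu
    · rw [symmDiff_comm S u, symmDiff_symmDiff_cancel_left]

/-- Any function with the Baire property agrees with a Borel measurable function
on a comeager set. -/
lemma exists_measurable_eq_residual (f : ℝ → ℝ) (hf : BaireFunction f) :
    ∃ g : ℝ → ℝ, Measurable g ∧ ∀ᵇ x, f x = g x := by
  classical
  set B := TopologicalSpace.countableBasis ℝ with hBdef
  have hBc : B.Countable := TopologicalSpace.countable_countableBasis ℝ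
  have hBb := TopologicalSpace.isBasis_countableBasis ℝ
  have : Countable ↥B := hBc.to_subtype
  have key : ∀ b : B, ∃ u G : Set ℝ, IsOpen u ∧ MeasurableSet G ∧ G ∈ residual ℝ ∧
      ∀ x ∈ G, (x ∈ f ⁻¹' (b : Set ℝ) ↔ x ∈ u) := by
    rintro ⟨b, hb⟩
    have hbms : BaireMeasurableSet (f ⁻¹' b) :=
      (hbp_iff_bms _).mp (hf b (hBb.isOpen hb))
    obtain ⟨u, hu, heq⟩ := hbms.residualEq_isOpen
    have hres : {x | x ∈ f ⁻¹' b ↔ x ∈ u} ∈ residual ℝ := Filter.eventuallyEq_set.mp heq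
    obtain ⟨G, hGsub, hGδ, hGd⟩ := mem_residual.mp hres
    exact ⟨u, G, hu, hGδ.measurableSet, mem_residual.mpr ⟨G, Set.Subset.rfl, hGδ, hGd⟩,
      fun x hx => hGsub hx⟩
  choose u G hu hGm hGr hGe using key
  set D : Set ℝ := ⋂ b : B, G b with hDdef
  have hDm : MeasurableSet D := MeasurableSet.iInter fun b => hGm b
  have hDr : D ∈ residual ℝ := countable_iInter_mem.mpr hGr
  refine ⟨fun x => if x ∈ D then f x else 0, ?_, ?_⟩
  · apply measurable_of_isOpen
    intro V hV
    have heq : (fun x => if x ∈ D then f x else 0) ⁻¹' V =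
        (⋃ b : B, ⋃ _ : (b : Set ℝ) ⊆ V, (u b ∩ D)) ∪ (if (0:ℝ) ∈ V then Dᶜ else ∅) := by
      ext x
      by_cases hx : x ∈ D
      · simp only [Set.mem_preimage, if_pos hx, Set.mem_union, Set.mem_iUnion]
        constructor
        · intro hfx
          obtain ⟨b, hbB, hfb, hbV⟩ := hBb.exists_subset_of_mem_open hfx hV
          refine Or.inl ⟨⟨b, hbB⟩, hbV, ?_, hx⟩
          exact (hGe ⟨b, hbB⟩ x (Set.mem_iInter.mp hx ⟨b, hbB⟩)).mp hfb
        · rintro (⟨b, hbV, hxu, -⟩ | h0)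
          · exact hbV ((hGe b x (Set.mem_iInter.mp hx b)).mpr hxu)
          · split_ifs at h0 with h
            · exact absurd h0 (by simpa using hx)
            · exact absurd h0 (Set.notMem_empty x)
      · simp only [Set.mem_preimage, if_neg hx, Set.mem_union, Set.mem_iUnion]
        constructor
        · intro h0V
          right; rw [if_pos h0V]; exact hx
        · rintro (⟨b, -, -, hxD⟩ | h0)
          · exact absurd hxD hx
          · split_ifs at h0 with h
            · exact h
            · exact absurd h0 (Set.notMem_empty x)
    rw [heq]
    refine MeasurableSet.union (MeasurableSet.iUnion fun b => MeasurableSet.iUnion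
      fun _ => ((hu b).measurableSet.inter hDm)) ?_
    split_ifs
    · exact hDm.compl
    · exact MeasurableSet.empty
  · filter_upwards [hDr] with x hx
    rw [if_pos hx]

theorem stmt_1 (F : ℝ × ℝ → ℝ) :
    BaireSupMeasurable F ↔
      ∀ f : ℝ → ℝ, Measurable f → BaireFunction (fun x => F (x, f x)) := by
  constructor
  · intro h f hf
    apply h f
    intro U hU
    rw [hbp_iff_bms]
    exact ((hf hU.measurableSet)).baireMeasurableSet
  · intro h f hf U hU
    obtain ⟨g, hg, heq⟩ := exists_measurable_eq_residual f hf
    have hbg := h g hg U hU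
    rw [hbp_iff_bms] at hbg ⊢
    refine hbg.congr (Filter.eventuallyEq_set.mpr ?_)
    filter_upwards [heq] with x hx
    simp [hx]
end

section
/- Assume Hypothesis (H). Then for every set A ⊆ ℝ × ℝ such that both A and (ℝ × ℝ) ∖ A are nowhere meager in ℝ × ℝ, there exists a Borel measurable function f : ℝ → ℝ such that the set {x ∈ ℝ : (x, f(x)) ∈ A} does not have the Baire property. -/
open scoped symmDiff

/-- A set `A` is nowhere meager in `X` if `A ∩ U` is nonmeager for every
nonempty open `U ⊆ X`. -/
def NowhereMeager {X : Type*} [TopologicalSpace X] (A : Set X) : Prop :=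
  ∀ U : Set X, IsOpen U → U.Nonempty → ¬ IsMeagre (A ∩ U)

/-- Hypothesis (H): for every `A ⊆ 2^ω × 2^ω` such that both `A` and its complement
are nowhere meager, there is an autohomeomorphism `f` of the Cantor space `2^ω`
such that `{x : (x, f x) ∈ A}` does not have the Baire property. -/
def HypH : Prop :=
  ∀ A : Set ((ℕ → Bool) × (ℕ → Bool)),
    NowhereMeager A → NowhereMeager Aᶜ →
    ∃ f : (ℕ → Bool) ≃ₜ (ℕ → Bool),
      ¬ HasBaireProperty {x : ℕ → Bool | (x, f x) ∈ A}

/-!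
Transport everything along the binary-expansion map `ofBits : 2^ω → [0, 1]`. It is continuous,
it maps every nonempty open set onto a set with nonempty interior (a cylinder goes onto a dyadic
interval), and it is injective at every sequence that is not eventually constant, i.e. off a
countable, hence meager, set. The first two properties make `ofBits`-preimages of meager sets
meager, so preimages preserve the Baire property; the last one, with compactness of `2^ω`, makes
images of meager sets meager. Hence `ofBits × ofBits` pulls `A` and `Aᶜ` back to nowhere meager
sets. If `h` is the homeomorphism given by (H) for the pulled-back set, then
`f = ofBits ∘ h ∘ bits` is Borel, and the `ofBits`-preimage of `{x | (x, f x) ∈ A}` agrees with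
`{x | (x, h x) ∈ (ofBits × ofBits)⁻¹ A}` off the eventually constant sequences.
-/

open Set Filter Topology

def IsFeeblyOpenMap {X Y : Type*} [TopologicalSpace X] [TopologicalSpace Y] (f : X → Y) : Prop :=
  ∀ U : Set X, IsOpen U → U.Nonempty → (interior (f '' U)).Nonempty

section Meagre

variable {X Y : Type*} [TopologicalSpace X] [TopologicalSpace Y] {f : X → Y}

lemma hasBaireProperty_iff_baireMeasurableSet_s5 {S : Set X} :
    HasBaireProperty S ↔ BaireMeasurableSet S := by
  simp_rw [BaireMeasurableSet.iff_residualEq_isOpen, eventuallyEq_set]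
  constructor
  · rintro ⟨U, M, hU, hM, rfl⟩
    refine ⟨U, hU, ?_⟩
    filter_upwards [hM] with x hx
    simp_all [mem_symmDiff]
  · rintro ⟨U, hU, hSU⟩
    refine ⟨U, U ∆ S, hU, ?_, by rw [symmDiff_symmDiff_cancel_left]⟩
    filter_upwards [hSU] with x hx
    simp_all

lemma Set.Countable.isMeagre [T1Space X] [∀ x : X, (𝓝[≠] x).NeBot] {s : Set X}
    (hs : s.Countable) : IsMeagre s := by
  rw [← biUnion_of_singleton s]
  refine isMeagre_biUnion hs fun x _ => IsNowhereDense.isMeagre ?_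
  rw [isClosed_singleton.isNowhereDense_iff]
  exact interior_singleton x

lemma IsFeeblyOpenMap.tendsto_residual (hf : IsFeeblyOpenMap f) (hc : Continuous f) :
    Tendsto f (residual X) (residual Y) := by
  refine le_countableGenerate_iff_of_countableInterFilter.mpr ?_
  rintro t ⟨ht, htd⟩
  refine residual_of_dense_open (ht.preimage hc) (dense_iff_inter_open.2 fun U hU hUne => ?_)
  obtain ⟨y, hyU, hyt⟩ := htd.inter_open_nonempty _ isOpen_interior (hf U hU hUne)
  obtain ⟨x, hxU, rfl⟩ := interior_subset hyU
  exact ⟨x, hxU, hyt⟩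

lemma BaireMeasurableSet.preimage_of_tendsto_residual (hc : Continuous f)
    (hf : Tendsto f (residual X) (residual Y)) {s : Set Y} (hs : BaireMeasurableSet s) :
    BaireMeasurableSet (f ⁻¹' s) := by
  rw [BaireMeasurableSet.iff_residualEq_isOpen] at hs ⊢
  obtain ⟨u, hu, hsu⟩ := hs
  exact ⟨f ⁻¹' u, hu.preimage hc, hsu.filter_mono hf⟩

lemma IsFeeblyOpenMap.prodMap {X' Y' : Type*} [TopologicalSpace X'] [TopologicalSpace Y']
    {g : X' → Y'} (hf : IsFeeblyOpenMap f) (hg : IsFeeblyOpenMap g) :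
    IsFeeblyOpenMap (Prod.map f g) := by
  rintro W hW ⟨⟨x, x'⟩, hx⟩
  obtain ⟨U, V, hU, hV, hxU, hx'V, hUV⟩ := isOpen_prod_iff.1 hW x x' hx
  have := (hf U hU ⟨x, hxU⟩).prod (hg V hV ⟨x', hx'V⟩)
  rw [← interior_prod_eq, ← prodMap_image_prod] at this
  exact this.mono (interior_mono (image_mono hUV))

section Image

variable [CompactSpace X] [T2Space Y] (hc : Continuous f)
  (hinj : Dense {x | ∀ x', f x' = f x → x' = x})
include hc hinj

lemma IsNowhereDense.image_of_dense_injective_points {E : Set X} (hE : IsNowhereDense E) :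
    IsNowhereDense (f '' E) := by
  refine IsNowhereDense.mono (image_mono subset_closure) ?_
  have hK : IsClosed (f '' closure E) := (isClosed_closure.isCompact.image hc).isClosed
  rw [hK.isNowhereDense_iff, eq_empty_iff_forall_notMem]
  intro y hy
  set W := f ⁻¹' interior (f '' closure E)
  have hWo : IsOpen W := isOpen_interior.preimage hc
  have hWD : W ∩ {x | ∀ x', f x' = f x → x' = x} ⊆ closure E := by
    rintro x ⟨hxW, hx⟩
    obtain ⟨e, he, hex⟩ := interior_subset hxW
    rwa [← hx e hex]
  have hWE : W ⊆ interior (closure E) := interior_maximal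
    ((hinj.open_subset_closure_inter hWo).trans (closure_minimal hWD isClosed_closure)) hWo
  obtain ⟨x, -, rfl⟩ := interior_subset hy
  exact (hE ▸ hWE) hy

lemma IsMeagre.image_of_dense_injective_points {M : Set X} (hM : IsMeagre M) :
    IsMeagre (f '' M) := by
  rw [isMeagre_iff_countable_union_isNowhereDense] at hM ⊢
  obtain ⟨S, hS, hSc, hMS⟩ := hM
  refine ⟨image f '' S, ?_, hSc.image _, ?_⟩
  · rintro _ ⟨E, hE, rfl⟩
    exact (hS E hE).image_of_dense_injective_points hc hinj
  · rw [← image_sUnion]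
    exact image_mono hMS

lemma NowhereMeager.preimage (hf : IsFeeblyOpenMap f) {A : Set Y} (hA : NowhereMeager A) :
    NowhereMeager (f ⁻¹' A) := by
  intro U hU hUne hAU
  refine hA _ isOpen_interior (hf U hU hUne)
    ((hAU.image_of_dense_injective_points hc hinj).mono ?_)
  rintro y ⟨hyA, hyU⟩
  obtain ⟨x, hxU, rfl⟩ := interior_subset hyU
  exact ⟨x, ⟨hyA, hxU⟩, rfl⟩

end Image

end Meagre

lemma Dense.injective_points_prodMap {X Y X' Y' : Type*} [TopologicalSpace X]
    [TopologicalSpace X'] {f : X → Y} {g : X' → Y'}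
    (hf : Dense {x | ∀ x', f x' = f x → x' = x}) (hg : Dense {x | ∀ x', g x' = g x → x' = x}) :
    Dense {p | ∀ p', Prod.map f g p' = Prod.map f g p → p' = p} :=
  (hf.prod hg).mono fun _ hp _ h =>
    Prod.ext (hp.1 _ (congrArg Prod.fst h)) (hp.2 _ (congrArg Prod.snd h))

lemma Filter.eventuallyConst_comp_add_one_iff {α : Type*} {x : ℕ → α} :
    EventuallyConst (fun n => x (n + 1)) atTop ↔ EventuallyConst x atTop := by
  conv_rhs => rw [EventuallyConst, ← map_add_atTop_eq_nat 1, map_map]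
  rfl

lemma Set.countable_setOf_eventuallyConst {α : Type*} [Countable α] :
    {x : ℕ → α | EventuallyConst x atTop}.Countable := by
  refine (countable_range fun p : (n : ℕ) × (Fin (n + 1) → α) =>
    fun m => p.2 ⟨min m p.1, by omega⟩).mono ?_
  intro x hx
  obtain ⟨n, hn⟩ := eventuallyConst_atTop.1 hx
  refine ⟨⟨n, fun k => x k⟩, funext fun m => ?_⟩
  rcases le_total m n with h | h
  · simp [min_eq_left h]
  · simp [min_eq_right h, hn m h]

noncomputable def ofBits (x : ℕ → Bool) : ℝ := Real.ofDigits (finTwoEquiv.symm ∘ x)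

noncomputable def bits (y : ℝ) : ℕ → Bool := finTwoEquiv ∘ Real.digits y 2

lemma cast_finTwoEquiv_symm (b : Bool) :
    ((finTwoEquiv.symm b : Fin 2) : ℝ) = if b then 1 else 0 := by
  cases b <;> simp [finTwoEquiv]

lemma continuous_ofBits : Continuous ofBits :=
  Real.continuous_ofDigits.comp (continuous_pi fun n =>
    continuous_of_discreteTopology.comp (continuous_apply n))

lemma measurable_bits : Measurable bits :=
  measurable_pi_lambda _ fun _ =>
    (Measurable.of_discrete (f := fun m : ℕ => finTwoEquiv (Fin.ofNat 2 m))).comp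
      (measurable_id.mul_const _).nat_floor

lemma ofBits_bits {y : ℝ} (hy : y ∈ Ico 0 1) : ofBits (bits y) = y := by
  simpa [ofBits, bits, ← Function.comp_assoc] using Real.ofDigits_digits one_lt_two hy

lemma ofBits_nonneg (x : ℕ → Bool) : 0 ≤ ofBits x := Real.ofDigits_nonneg _

lemma ofBits_le_one (x : ℕ → Bool) : ofBits x ≤ 1 := Real.ofDigits_le_one _

lemma ofBits_eq_sum_add (x : ℕ → Bool) (n : ℕ) :
    ofBits x = ∑ i ∈ Finset.range n, Real.ofDigitsTerm (finTwoEquiv.symm ∘ x) i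
      + (2 ^ n)⁻¹ * ofBits (fun i => x (i + n)) := by
  rw [ofBits, Real.ofDigits_eq_sum_add_ofDigits _ n]
  simp [ofBits, Function.comp_def]

lemma ofBits_eq_half_add (x : ℕ → Bool) :
    ofBits x = ((if x 0 then 1 else 0) + ofBits (fun n => x (n + 1))) / 2 := by
  rw [ofBits_eq_sum_add x 1]
  simp only [Finset.range_one, Finset.sum_singleton, Real.ofDigitsTerm, Function.comp_apply,
    cast_finTwoEquiv_symm]
  split_ifs <;> ring

lemma ofBits_add_ofBits_not (x : ℕ → Bool) : ofBits x + ofBits (fun n => !x n) = 1 := by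
  rw [← Real.ofDigits_const_last_eq_one 1, ofBits, ofBits, Real.ofDigits, Real.ofDigits,
    ← Real.summable_ofDigitsTerm.tsum_add Real.summable_ofDigitsTerm]
  congr 1 with n
  cases h : x n <;> simp [Real.ofDigitsTerm, cast_finTwoEquiv_symm, h]

lemma ofBits_eq_zero {x : ℕ → Bool} (hx : ofBits x = 0) : x = fun _ => false := by
  have hsum : HasSum (Real.ofDigitsTerm (finTwoEquiv.symm ∘ x)) 0 :=
    hx ▸ Real.summable_ofDigitsTerm.hasSum
  have hterm := (hasSum_zero_iff_of_nonneg fun _ => Real.ofDigitsTerm_nonneg).1 hsum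
  funext n
  have hn := congrFun hterm n
  cases h : x n <;> simp_all [Real.ofDigitsTerm, cast_finTwoEquiv_symm]

lemma ofBits_eq_one {x : ℕ → Bool} (hx : ofBits x = 1) : x = fun _ => true := by
  have := ofBits_eq_zero (x := fun n => !x n) (by linarith [ofBits_add_ofBits_not x])
  funext n
  simpa using congrFun this n

lemma head_eq_of_ofBits_eq {x y : ℕ → Bool} (h : ofBits y = ofBits x)
    (hx : ¬EventuallyConst x atTop) : y 0 = x 0 := by
  rw [← eventuallyConst_comp_add_one_iff] at hx
  rw [ofBits_eq_half_add x, ofBits_eq_half_add y] at h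
  have := ofBits_nonneg (fun n => x (n + 1))
  have := ofBits_nonneg (fun n => y (n + 1))
  have := ofBits_le_one (fun n => x (n + 1))
  have := ofBits_le_one (fun n => y (n + 1))
  -- otherwise the tail of `x` would be all ones or all zeros
  cases hx0 : x 0 <;> cases hy0 : y 0 <;> simp only [hx0, hy0] at h ⊢
  · rw [ofBits_eq_one (x := fun n => x (n + 1)) (by simp at h; linarith)] at hx
    exact (hx (.const true)).elim
  · rw [ofBits_eq_zero (x := fun n => x (n + 1)) (by simp at h; linarith)] at hx
    exact (hx (.const false)).elim

lemma eq_of_ofBits_eq {x y : ℕ → Bool} (h : ofBits y = ofBits x)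
    (hx : ¬EventuallyConst x atTop) : y = x := by
  funext n
  induction n generalizing x y with
  | zero => exact head_eq_of_ofBits_eq h hx
  | succ n ih =>
    have h0 := head_eq_of_ofBits_eq h hx
    rw [ofBits_eq_half_add y, ofBits_eq_half_add x, h0] at h
    exact ih (y := fun n => y (n + 1)) (by linarith) (eventuallyConst_comp_add_one_iff.not.2 hx)

lemma bits_ofBits {x : ℕ → Bool} (hx : ¬EventuallyConst x atTop) : bits (ofBits x) = x := by
  have hlt : ofBits x < 1 := (ofBits_le_one x).lt_of_ne fun h1 =>
    hx (ofBits_eq_one h1 ▸ .const true)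
  exact eq_of_ofBits_eq (ofBits_bits ⟨ofBits_nonneg x, hlt⟩) hx

lemma isFeeblyOpenMap_ofBits : IsFeeblyOpenMap ofBits := by
  rintro U hU ⟨x, hx⟩
  obtain ⟨_, ⟨y, n, rfl⟩, -, hyU⟩ :=
    (PiNat.isTopologicalBasis_cylinders _).exists_subset_of_mem_open hx hU
  set a := ∑ i ∈ Finset.range n, Real.ofDigitsTerm (finTwoEquiv.symm ∘ y) i
  have h2n : (0 : ℝ) < 2 ^ n := by positivity
  have hsub : Ioo a (a + (2 ^ n)⁻¹) ⊆ ofBits '' U := by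
    intro t ⟨hat, hta⟩
    set z := (t - a) * 2 ^ n
    have hz : z ∈ Ico 0 1 := by
      refine ⟨by nlinarith, ?_⟩
      calc z < (2 ^ n)⁻¹ * 2 ^ n := mul_lt_mul_of_pos_right (by linarith) h2n
        _ = 1 := inv_mul_cancel₀ h2n.ne'
    set v : ℕ → Bool := fun i => if i < n then y i else bits z (i - n)
    have hprefix : ∑ i ∈ Finset.range n, Real.ofDigitsTerm (finTwoEquiv.symm ∘ v) i = a :=
      Finset.sum_congr rfl fun i hi => by simp [v, Real.ofDigitsTerm, Finset.mem_range.1 hi]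
    have htail : (fun i => v (i + n)) = bits z := funext fun i => by simp [v]
    refine ⟨v, hyU fun i hi => if_pos hi, ?_⟩
    rw [ofBits_eq_sum_add v n, hprefix, htail, ofBits_bits hz]
    field_simp
    ring
  exact ⟨a + (2 ^ n)⁻¹ / 2, interior_maximal hsub isOpen_Ioo
    ⟨by linarith [inv_pos.2 h2n], by linarith [inv_pos.2 h2n]⟩⟩

lemma isMeagre_setOf_eventuallyConst : IsMeagre {x : ℕ → Bool | EventuallyConst x atTop} :=
  IsMeagre.mono (subset_preimage_image _ _) <| isFeeblyOpenMap_ofBits.tendsto_residual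
    continuous_ofBits (countable_setOf_eventuallyConst.image ofBits).isMeagre

lemma dense_injective_points_ofBits : Dense {x | ∀ x', ofBits x' = ofBits x → x' = x} :=
  (dense_of_mem_residual isMeagre_setOf_eventuallyConst).mono fun _ hx _ h =>
    eq_of_ofBits_eq h hx

theorem stmt_5 (hH : HypH) (A : Set (ℝ × ℝ))
    (h1 : NowhereMeager A) (h2 : NowhereMeager Aᶜ) :
    ∃ f : ℝ → ℝ, Measurable f ∧ ¬ HasBaireProperty {x : ℝ | (x, f x) ∈ A} := by
  have hc : Continuous (Prod.map ofBits ofBits) := continuous_ofBits.prodMap continuous_ofBits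
  have hinj := dense_injective_points_ofBits.injective_points_prodMap dense_injective_points_ofBits
  have ho := isFeeblyOpenMap_ofBits.prodMap isFeeblyOpenMap_ofBits
  obtain ⟨h, hT⟩ := hH _ (h1.preimage hc hinj ho) (h2.preimage hc hinj ho)
  refine ⟨ofBits ∘ h ∘ bits,
    continuous_ofBits.measurable.comp (h.continuous.measurable.comp measurable_bits), fun hS => ?_⟩
  rw [hasBaireProperty_iff_baireMeasurableSet_s5] at hS hT
  refine hT ((hS.preimage_of_tendsto_residual continuous_ofBits
    (isFeeblyOpenMap_ofBits.tendsto_residual continuous_ofBits)).congr ?_)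
  filter_upwards [isMeagre_setOf_eventuallyConst] with x hx
  change ((ofBits x, ofBits (h (bits (ofBits x)))) ∈ A) = ((ofBits x, ofBits (h x)) ∈ A)
  rw [bits_ofBits hx]
end

section
/- If a set A ⊆ ℝ × ℝ does not have the Baire property, then there exist nonempty open intervals U, W ⊆ ℝ such that both A ∩ (U × W) and (U × W) ∖ A are nowhere meager in the subspace U × W. -/
open scoped symmDiff

/-!
Let `G` be the union of the open sets in which `A` is meagre, and `H` the same for `Aᶜ`. By the
Banach category theorem (here a countable-basis argument), `A ∩ G` and `Aᶜ ∩ H` are meagre. If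
`G ∪ H` were dense, its complement would be meagre too, so `A` would differ from the open set `H`
by a meagre set. Hence some box `U × W` misses `G ∪ H`, and then no nonempty open piece of it can
meet `A` or `Aᶜ` in a meagre set.
-/

open Set

section MeagreLocus

variable {X : Type*} [TopologicalSpace X]

def meagreLocus (A : Set X) : Set X :=
  ⋃₀ {V | IsOpen V ∧ IsMeagre (A ∩ V)}

theorem isOpen_meagreLocus (A : Set X) : IsOpen (meagreLocus A) :=
  isOpen_sUnion fun _ hV => hV.1

theorem subset_meagreLocus {A V : Set X} (hV : IsOpen V) (hAV : IsMeagre (A ∩ V)) :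
    V ⊆ meagreLocus A :=
  subset_sUnion_of_mem ⟨hV, hAV⟩

theorem isMeagre_inter_meagreLocus [SecondCountableTopology X] (A : Set X) :
    IsMeagre (A ∩ meagreLocus A) := by
  obtain ⟨b, hbc, -, hb⟩ := TopologicalSpace.exists_countable_basis X
  have hcover : A ∩ meagreLocus A ⊆ ⋃ v ∈ {v ∈ b | IsMeagre (A ∩ v)}, A ∩ v := by
    rintro x ⟨hxA, V, ⟨hVo, hVm⟩, hxV⟩
    obtain ⟨v, hvb, hxv, hvV⟩ := hb.exists_subset_of_mem_open hxV hVo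
    exact mem_biUnion ⟨hvb, hVm.mono (inter_subset_inter_right A hvV)⟩ ⟨hxA, hxv⟩
  exact (isMeagre_biUnion (hbc.mono (sep_subset b _)) fun _ hv => hv.2).mono hcover

theorem hasBaireProperty_of_dense_meagreLocus [SecondCountableTopology X] {A : Set X}
    (hd : Dense (meagreLocus A ∪ meagreLocus Aᶜ)) : HasBaireProperty A := by
  set G := meagreLocus A
  set H := meagreLocus Aᶜ
  have hGH : IsMeagre (G ∪ H)ᶜ := by
    rw [IsMeagre, compl_compl]
    exact residual_of_dense_open ((isOpen_meagreLocus A).union (isOpen_meagreLocus Aᶜ)) hd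
  have hsub : H ∆ A ⊆ (A ∩ G) ∪ (Aᶜ ∩ H) ∪ (G ∪ H)ᶜ := by
    intro x hx
    by_cases hxA : x ∈ A <;> by_cases hxG : x ∈ G <;> simp_all [mem_symmDiff]
  refine ⟨H, H ∆ A, isOpen_meagreLocus Aᶜ, ?_, (symmDiff_symmDiff_cancel_left H A).symm⟩
  exact (((isMeagre_inter_meagreLocus A).union (isMeagre_inter_meagreLocus Aᶜ)).union hGH).mono
    hsub

theorem nowhereMeager_of_disjoint_meagreLocus {A P : Set X} (hP : IsOpen P)
    (hdisj : Disjoint P (meagreLocus A)) : NowhereMeager {p : P | (p : X) ∈ A} := by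
  rintro U hU ⟨p, hpU⟩ hm
  obtain ⟨V, hV, rfl⟩ := isOpen_induced_iff.mp hU
  have hmeagre : IsMeagre (A ∩ (V ∩ P)) := by
    refine hm.image_val.mono ?_
    rintro x ⟨hxA, hxV, hxP⟩
    exact ⟨⟨x, hxP⟩, ⟨hxA, hxV⟩, rfl⟩
  exact hdisj.ne_of_mem p.2 (subset_meagreLocus (hV.inter hP) hmeagre ⟨hpU, p.2⟩) rfl

end MeagreLocus

theorem exists_Ioo_prod_Ioo_subset {α β : Type*} [LinearOrder α] [TopologicalSpace α]
    [OrderTopology α] [NoMinOrder α] [NoMaxOrder α] [LinearOrder β] [TopologicalSpace β]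
    [OrderTopology β] [NoMinOrder β] [NoMaxOrder β] {W : Set (α × β)} (hW : IsOpen W)
    (hne : W.Nonempty) : ∃ a b c d, a < b ∧ c < d ∧ Ioo a b ×ˢ Ioo c d ⊆ W := by
  obtain ⟨⟨x, y⟩, hxy⟩ := hne
  obtain ⟨u, v, hu, hv, hxu, hyv, huv⟩ := isOpen_prod_iff.mp hW x y hxy
  obtain ⟨a, b, hxab, hab⟩ := mem_nhds_iff_exists_Ioo_subset.mp (hu.mem_nhds hxu)
  obtain ⟨c, d, hycd, hcd⟩ := mem_nhds_iff_exists_Ioo_subset.mp (hv.mem_nhds hyv)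
  exact ⟨a, b, c, d, hxab.1.trans hxab.2, hycd.1.trans hycd.2,
    (prod_mono hab hcd).trans huv⟩

theorem stmt_6 (A : Set (ℝ × ℝ)) (hA : ¬ HasBaireProperty A) :
    ∃ a b c d : ℝ, a < b ∧ c < d ∧
      -- `A ∩ (U × W)` is nowhere meager in the subspace `U × W`
      NowhereMeager {p : ↥(Set.Ioo a b ×ˢ Set.Ioo c d) | (p : ℝ × ℝ) ∈ A} ∧
      -- `(U × W) \ A` is nowhere meager in the subspace `U × W`
      NowhereMeager {p : ↥(Set.Ioo a b ×ˢ Set.Ioo c d) | (p : ℝ × ℝ) ∉ A} := by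
  obtain ⟨W, hWo, hWne, hWdisj⟩ : ∃ W, IsOpen W ∧ W.Nonempty ∧
      Disjoint W (meagreLocus A ∪ meagreLocus Aᶜ) := by
    have hnd := mt hasBaireProperty_of_dense_meagreLocus hA
    rw [dense_iff_inter_open] at hnd
    push Not at hnd
    obtain ⟨W, hWo, hWne, hW⟩ := hnd
    exact ⟨W, hWo, hWne, disjoint_iff_inter_eq_empty.mpr hW⟩
  obtain ⟨a, b, c, d, hab, hcd, hbox⟩ := exists_Ioo_prod_Ioo_subset hWo hWne
  have hPdisj := hWdisj.mono_left hbox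
  have hPo : IsOpen (Ioo a b ×ˢ Ioo c d) := isOpen_Ioo.prod isOpen_Ioo
  exact ⟨a, b, c, d, hab, hcd,
    nowhereMeager_of_disjoint_meagreLocus hPo (disjoint_union_right.mp hPdisj).1,
    nowhereMeager_of_disjoint_meagreLocus hPo (disjoint_union_right.mp hPdisj).2⟩
end

section
/- Let E ⊆ 2^ω be a countable set and let Y = 2^ω ∖ E. If A ⊆ Y × Y is such that both A and (Y × Y) ∖ A are nowhere meager in the subspace Y × Y, then both A and (2^ω × 2^ω) ∖ A are nowhere meager in 2^ω × 2^ω. -/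
open Set Topology

/-- Preimage in a dense subspace of a nowhere dense set is nowhere dense. -/
lemma nd_preimage_of_dense {X : Type*} [TopologicalSpace X] {S : Set X} (hS : Dense S)
    {N : Set X} (hN : IsNowhereDense N) :
    IsNowhereDense ((Subtype.val ⁻¹' N : Set ↥S)) := by
  rw [IsNowhereDense, eq_empty_iff_forall_notMem]
  intro p hp
  rw [mem_interior] at hp
  obtain ⟨V, hVsub, hVopen, hpV⟩ := hp
  obtain ⟨U, hUopen, hUeq⟩ := isOpen_induced_iff.1 hVopen
  -- U ∩ S ⊆ closure N
  have hclos : closure (Subtype.val ⁻¹' N : Set ↥S)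
      = Subtype.val ⁻¹' closure (Subtype.val '' (Subtype.val ⁻¹' N)) :=
    Topology.IsEmbedding.subtypeVal.closure_eq_preimage_closure_image _
  have hUS : ∀ x ∈ U ∩ S, x ∈ closure N := by
    rintro x ⟨hxU, hxS⟩
    have hxV : (⟨x, hxS⟩ : ↥S) ∈ V := by rw [← hUeq]; exact hxU
    have := hVsub hxV
    rw [hclos] at this
    exact closure_mono (image_preimage_subset _ _) this
  have hUsub : U ⊆ closure N := by
    intro x hx
    have h1 := hS.open_subset_closure_inter hUopen hx
    have h2 : closure (U ∩ S) ⊆ closure N := by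
      have := closure_mono (fun y hy => hUS y hy)
      simpa [closure_closure] using this
    exact h2 h1
  have : (p : X) ∈ interior (closure N) := by
    rw [mem_interior]
    exact ⟨U, hUsub, hUopen, by rw [← hUeq] at hpV; exact hpV⟩
  rw [hN] at this
  exact this

/-- Preimage in a dense subspace of a meager set is meager. -/
lemma meagre_preimage_of_dense {X : Type*} [TopologicalSpace X] {S : Set X} (hS : Dense S)
    {N : Set X} (hN : IsMeagre N) :
    IsMeagre ((Subtype.val ⁻¹' N : Set ↥S)) := by
  rw [isMeagre_iff_countable_union_isNowhereDense] at hN ⊢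
  obtain ⟨T, hTnd, hTc, hTsub⟩ := hN
  refine ⟨(fun t => (Subtype.val ⁻¹' t : Set ↥S)) '' T, ?_, hTc.image _, ?_⟩
  · rintro t' ⟨t, ht, rfl⟩
    exact nd_preimage_of_dense hS (hTnd t ht)
  · intro p hp
    obtain ⟨t, ht, hpt⟩ := hTsub hp
    exact ⟨Subtype.val ⁻¹' t, ⟨t, ht, rfl⟩, hpt⟩

lemma exists_ne_mem_nhds (x : ℕ → Bool) {U : Set (ℕ → Bool)} (hU : U ∈ nhds x) :
    ∃ y ∈ U, y ≠ x := by
  have htend : Filter.Tendsto (fun n => Function.update x n (!x n)) Filter.atTop (nhds x) := by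
    rw [tendsto_pi_nhds]
    intro k
    refine Filter.Tendsto.congr' ?_ tendsto_const_nhds
    filter_upwards [Filter.eventually_gt_atTop k] with n hn
    exact (Function.update_of_ne hn.ne _ _).symm
  obtain ⟨n, hn⟩ := (htend.eventually_mem hU).exists
  exact ⟨Function.update x n (!x n), hn, fun h => by
    have := congrFun h n
    simp [Function.update_self] at this⟩

lemma dense_compl_countable {E : Set (ℕ → Bool)} (hE : E.Countable) : Dense Eᶜ := by
  have hmeagre : IsMeagre E := by
    rw [isMeagre_iff_countable_union_isNowhereDense]
    refine ⟨(fun x => {x}) '' E, ?_, hE.image _, ?_⟩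
    · rintro t ⟨x, _, rfl⟩
      rw [IsNowhereDense, closure_singleton, eq_empty_iff_forall_notMem]
      intro y hy
      have hyx : y = x := by simpa using interior_subset hy
      subst hyx
      obtain ⟨z, hz, hzy⟩ := exists_ne_mem_nhds y (mem_interior_iff_mem_nhds.1 hy)
      exact hzy hz
    · intro x hx; exact ⟨{x}, ⟨x, hx, rfl⟩, rfl⟩
  exact dense_of_mem_residual hmeagre

theorem stmt_8 (E : Set (ℕ → Bool)) (hE : E.Countable)
    (A : Set ((ℕ → Bool) × (ℕ → Bool))) (hA : A ⊆ Eᶜ ×ˢ Eᶜ)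
    -- `A` is nowhere meager in the subspace `Y × Y`, where `Y = 2^ω \ E`
    (h1 : NowhereMeager {p : ↥(Eᶜ ×ˢ Eᶜ) | (p : (ℕ → Bool) × (ℕ → Bool)) ∈ A})
    -- `(Y × Y) \ A` is nowhere meager in the subspace `Y × Y`
    (h2 : NowhereMeager {p : ↥(Eᶜ ×ˢ Eᶜ) | (p : (ℕ → Bool) × (ℕ → Bool)) ∉ A}) :
    NowhereMeager A ∧ NowhereMeager Aᶜ := by
  have hdS : Dense (Eᶜ ×ˢ Eᶜ : Set ((ℕ → Bool) × (ℕ → Bool))) :=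
    (dense_compl_countable hE).prod (dense_compl_countable hE)
  constructor
  · intro U hU hUne hmeag
    obtain ⟨x, hxU, hxS⟩ := hdS.inter_open_nonempty U hU hUne
    refine h1 (Subtype.val ⁻¹' U) (hU.preimage continuous_subtype_val) ⟨⟨x, hxS⟩, hxU⟩ ?_
    have : ({p : ↥(Eᶜ ×ˢ Eᶜ) | (p : (ℕ → Bool) × (ℕ → Bool)) ∈ A} ∩ Subtype.val ⁻¹' U)
        = Subtype.val ⁻¹' (A ∩ U) := rfl
    rw [this]
    exact meagre_preimage_of_dense hdS hmeag
  · intro U hU hUne hmeag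
    obtain ⟨x, hxU, hxS⟩ := hdS.inter_open_nonempty U hU hUne
    refine h2 (Subtype.val ⁻¹' U) (hU.preimage continuous_subtype_val) ⟨⟨x, hxS⟩, hxU⟩ ?_
    have : ({p : ↥(Eᶜ ×ˢ Eᶜ) | (p : (ℕ → Bool) × (ℕ → Bool)) ∉ A} ∩ Subtype.val ⁻¹' U)
        = Subtype.val ⁻¹' (Aᶜ ∩ U) := rfl
    rw [this]
    exact meagre_preimage_of_dense hdS hmeag
end

section
/- Let h be an injective function defined on a finite set D ⊆ 2^ω with values in 2^ω, let n ∈ ℕ, and let π be a permutation of 2^n such that h(x)↾n = π(x↾n) for every x ∈ D. Then for every m ∈ ℕ there exist n' ∈ ℕ with n' ≥ m and n' ≥ n and a permutation π' of 2^{n'} such that π'(η)↾n = π(η↾n) for every η ∈ 2^{n'} and h(x)↾n' = π'(x↾n') for every x ∈ D. -/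
/-- Restriction of `x ∈ 2^ω` to its first `n` coordinates. -/
def res (n : ℕ) (x : ℕ → Bool) : Fin n → Bool := fun i => x i

/-- Restriction of `η ∈ 2^t` to its first `n` coordinates (`n ≤ t`). -/
def resLE {n t : ℕ} (h : n ≤ t) (η : Fin t → Bool) : Fin n → Bool :=
  fun i => η (Fin.castLE h i)

open Classical in
/-- Any injective partial map on a finite type extends to a permutation. -/
lemma exists_perm_extend {α : Type*} [Finite α] (s : Set α) (f : α → α)
    (hf : Set.InjOn f s) : ∃ g : Equiv.Perm α, ∀ a ∈ s, g a = f a := by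
  have hcard : Nat.card ↥(sᶜ) = Nat.card ↥((f '' s)ᶜ) := by
    rw [Nat.card_coe_set_eq, Nat.card_coe_set_eq]
    have h1 := Set.ncard_add_ncard_compl s (Set.toFinite s) (Set.toFinite _)
    have h2 := Set.ncard_add_ncard_compl (f '' s) (Set.toFinite _) (Set.toFinite _)
    have h3 : (f '' s).ncard = s.ncard := Set.ncard_image_of_injOn hf
    omega
  obtain ⟨c⟩ : Nonempty (↥(sᶜ) ≃ ↥((f '' s)ᶜ)) := Finite.card_eq.mp hcard
  set g0 : α → α := fun a => if h : a ∈ s then f a else (c ⟨a, h⟩ : α) with hg0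
  have hinj : Function.Injective g0 := by
    intro a b hab
    by_cases ha : a ∈ s <;> by_cases hb : b ∈ s <;>
        simp only [hg0, ha, hb, dif_pos, dif_neg, not_false_iff] at hab
    · exact hf ha hb hab
    · exact absurd (hab ▸ Set.mem_image_of_mem f ha) (c ⟨b, hb⟩).2
    · exact absurd (hab ▸ Set.mem_image_of_mem f hb) (c ⟨a, ha⟩).2
    · exact congrArg Subtype.val (c.injective (Subtype.ext hab))
  refine ⟨Equiv.ofBijective g0 (Finite.injective_iff_bijective.mp hinj), ?_⟩
  intro a ha
  simp [hg0, ha, Equiv.ofBijective]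

/-- A finite set of sequences is separated by some finite restriction. -/
lemma exists_res_injOn (S : Set (ℕ → Bool)) (hS : S.Finite) :
    ∃ N : ℕ, Set.InjOn (res N) S := by
  classical
  set F := hS.toFinset with hF
  set g : (ℕ → Bool) × (ℕ → Bool) → ℕ := fun p =>
    if h : p.1 = p.2 then 0 else Nat.find (Function.ne_iff.mp h) + 1 with hg
  refine ⟨(F ×ˢ F).sup g, ?_⟩
  intro x hx y hy hxy
  by_contra hne
  have hi : x (Nat.find (Function.ne_iff.mp hne)) ≠ y (Nat.find (Function.ne_iff.mp hne)) :=
    Nat.find_spec (Function.ne_iff.mp hne)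
  have hmem : (x, y) ∈ F ×ˢ F := by
    simp [hF, Finset.mem_product, hS.mem_toFinset, hx, hy]
  have hle : g (x, y) ≤ (F ×ˢ F).sup g := Finset.le_sup hmem
  have hle' : Nat.find (Function.ne_iff.mp hne) + 1 ≤ (F ×ˢ F).sup g := by
    refine le_trans (le_of_eq ?_) hle
    conv_rhs => rw [hg]
    simp [dif_neg hne]
  have hlt : Nat.find (Function.ne_iff.mp hne) < (F ×ˢ F).sup g := by omega
  exact hi (congrFun hxy ⟨_, hlt⟩)

theorem stmt_10 (D : Set (ℕ → Bool)) (hDfin : D.Finite)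
    (h : (ℕ → Bool) → (ℕ → Bool)) (hinj : Set.InjOn h D)
    (n : ℕ) (π : Equiv.Perm (Fin n → Bool))
    (hcomp : ∀ x ∈ D, res n (h x) = π (res n x)) (m : ℕ) :
    ∃ n' : ℕ, m ≤ n' ∧ ∃ hn : n ≤ n', ∃ π' : Equiv.Perm (Fin n' → Bool),
      (∀ η : Fin n' → Bool, resLE hn (π' η) = π (resLE hn η)) ∧
      (∀ x ∈ D, res n' (h x) = π' (res n' x)) := by
  classical
  obtain ⟨N, hN⟩ := exists_res_injOn (D ∪ h '' D) (hDfin.union (hDfin.image h))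
  set k := max N m with hk
  refine ⟨n + k, by omega, by omega, ?_⟩
  set n' := n + k with hn'
  have hn : n ≤ n' := by omega
  -- res n' is injective on D ∪ h '' D
  have hres : Set.InjOn (res n') (D ∪ h '' D) := by
    intro x hx y hy hxy
    refine hN hx hy ?_
    funext i
    have : (i : ℕ) < n' := by omega
    exact congrFun hxy ⟨i, this⟩
  -- the splitting equivalence
  set e : (Fin n' → Bool) ≃ (Fin n → Bool) × (Fin k → Bool) :=
    (Equiv.arrowCongr finSumFinEquiv.symm (Equiv.refl Bool)).trans
      (Equiv.sumArrowEquivProdArrow _ _ Bool) with he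
  have he1 : ∀ η : Fin n' → Bool, (e η).1 = resLE hn η := by
    intro η; funext i; rfl
  have heres : ∀ x : ℕ → Bool, (e (res n' x)).1 = res n x := by
    intro x; rw [he1]; rfl
  -- partial inverse of res n' on D
  set u : (Fin n' → Bool) → (ℕ → Bool) := Function.invFunOn (res n') D with hu
  -- fiberwise partial injections
  set s : (Fin n → Bool) → Set (Fin k → Bool) :=
    fun β => {r | e.symm (β, r) ∈ res n' '' D} with hs
  set f : (Fin n → Bool) → (Fin k → Bool) → (Fin k → Bool) :=
    fun β r => (e (res n' (h (u (e.symm (β, r)))))).2 with hf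
  have key : ∀ β : Fin n → Bool, ∀ r ∈ s β,
      u (e.symm (β, r)) ∈ D ∧ res n' (u (e.symm (β, r))) = e.symm (β, r) := by
    intro β r hr
    obtain ⟨x, hx, hxr⟩ := hr
    exact ⟨Function.invFunOn_mem ⟨x, hx, hxr⟩, Function.invFunOn_eq ⟨x, hx, hxr⟩⟩
  have hfinj : ∀ β : Fin n → Bool, Set.InjOn (f β) (s β) := by
    intro β r₁ h₁ r₂ h₂ hfr
    obtain ⟨hx₁, hr₁⟩ := key β r₁ h₁
    obtain ⟨hx₂, hr₂⟩ := key β r₂ h₂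
    set x₁ := u (e.symm (β, r₁)); set x₂ := u (e.symm (β, r₂))
    have hβ₁ : res n x₁ = β := by
      have := heres x₁; rw [hr₁] at this
      simpa using this.symm
    have hβ₂ : res n x₂ = β := by
      have := heres x₂; rw [hr₂] at this
      simpa using this.symm
    have hfst : (e (res n' (h x₁))).1 = (e (res n' (h x₂))).1 := by
      rw [heres, heres, hcomp x₁ hx₁, hcomp x₂ hx₂, hβ₁, hβ₂]
    have : e (res n' (h x₁)) = e (res n' (h x₂)) := Prod.ext hfst hfr
    have hhx : h x₁ = h x₂ :=
      hres (Or.inr ⟨x₁, hx₁, rfl⟩) (Or.inr ⟨x₂, hx₂, rfl⟩) (e.injective this)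
    have hxx : x₁ = x₂ := hinj hx₁ hx₂ hhx
    have : e.symm (β, r₁) = e.symm (β, r₂) := by rw [← hr₁, ← hr₂, hxx]
    have := e.symm.injective this
    exact (Prod.ext_iff.mp this).2
  choose ρ hρ using fun β => exists_perm_extend (s β) (f β) (hfinj β)
  set π' : Equiv.Perm (Fin n' → Bool) :=
    e.trans ((Equiv.prodShear π ρ).trans e.symm) with hπ'
  refine ⟨π', ?_, ?_⟩
  · intro η
    have : resLE hn (π' η) = (e (π' η)).1 := (he1 _).symm
    rw [this, hπ']
    simp only [Equiv.trans_apply, Equiv.apply_symm_apply, Equiv.prodShear_apply]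
    rw [he1]
  · intro x hx
    have hxmem : res n' x ∈ res n' '' D := ⟨x, hx, rfl⟩
    set a := res n' x with ha
    set β := (e a).1 with hβ
    set r := (e a).2 with hr
    have hea : e.symm (β, r) = a := by rw [hβ, hr]; exact e.symm_apply_apply a
    have hrs : r ∈ s β := by rw [hs]; simpa [hea] using hxmem
    have hux : u (e.symm (β, r)) = x := by
      obtain ⟨hmem, heq⟩ := key β r hrs
      exact hres (Or.inl hmem) (Or.inl hx) (heq.trans (hea.trans ha))
    have hfr : f β r = (e (res n' (h x))).2 := by rw [hf]; simp only [hux]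
    have hβx : β = res n x := by rw [hβ, ha, heres]
    have hfst : π β = (e (res n' (h x))).1 := by
      rw [heres, hcomp x hx, hβx]
    have : π' a = e.symm (π β, ρ β r) := by
      rw [hπ']
      simp only [Equiv.trans_apply, Equiv.prodShear_apply, ← hβ, ← hr]
    rw [ha] at this ⊢
    rw [this, hρ β r hrs, hfr, hfst]
    exact (e.symm_apply_apply _).symm
end

section
/- Let h be an injective function defined on a finite set D ⊆ 2^ω with values in 2^ω, let n ≤ t be natural numbers, and let π be a permutation of 2^n such that h(x)↾n = π(x↾n) for every x ∈ D. Let ξ_0, …, ξ_{k-1} ∈ 2^t be distinct and ζ_0, …, ζ_{k-1} ∈ 2^t be distinct, and assume: π(ξ_i↾n) = ζ_i↾n for every i < k; no x ∈ D satisfies x↾t = ξ_i, and no x ∈ D satisfies h(x)↾t = ζ_i, for any i < k; distinct elements of D have distinct restrictions to t, and distinct elements of h[D] have distinct restrictions to t. Then there exists a permutation π' of 2^t such that π'(η)↾n = π(η↾n) for every η ∈ 2^t, π'(x↾t) = h(x)↾t for every x ∈ D, and π'(ξ_i) = ζ_i for every i < k. -/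
/-!
Both `res t x ↦ res t (h x)` on `D` and `ξ i ↦ ζ i` respect the fibres of `resLE : 2^t → 2^n`
in the sense that they send the fibre over `a` into the fibre over `π a`, and together they form
one injective partial map. All fibres of `resLE` have the same size, so inside each fibre the
partial map extends to a bijection onto the target fibre; gluing these bijections gives `π'`.
-/

open Function

theorem exists_equiv_apply_eq_of_injective {ι γ δ : Type*} [Finite γ] [Finite δ]
    (hcard : Nat.card γ = Nat.card δ) {u : ι → γ} {v : ι → δ}
    (hu : Injective u) (hv : Injective v) :
    ∃ e : γ ≃ δ, ∀ i, e (u i) = v i := by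
  classical
  cases nonempty_fintype γ
  cases nonempty_fintype δ
  let e₀ : Set.range u ≃ Set.range v :=
    (Equiv.ofInjective u hu).symm.trans (Equiv.ofInjective v hv)
  have hcompl : Fintype.card ↥(Set.range u)ᶜ = Fintype.card ↥(Set.range v)ᶜ := by
    rw [Fintype.card_compl_set, Fintype.card_compl_set, Fintype.card_congr e₀,
      ← Nat.card_eq_fintype_card (α := γ), hcard, Nat.card_eq_fintype_card]
  obtain ⟨e₁⟩ := Fintype.card_eq.mp hcompl
  obtain ⟨e, he⟩ := (Equiv.Set.compl e₀).symm e₁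
  exact ⟨e, fun i => by simpa [e₀] using he ⟨u i, i, rfl⟩⟩

theorem exists_equiv_fiberwise_apply_eq {ι α β γ : Type*} [Finite α] [Finite β]
    {f : α → γ} {g : β → γ} (hcard : ∀ c, Nat.card {a // f a = c} = Nat.card {b // g b = c})
    {u : ι → α} {v : ι → β} (hu : Injective u) (hv : Injective v)
    (huv : ∀ i, g (v i) = f (u i)) :
    ∃ e : α ≃ β, (∀ a, g (e a) = f a) ∧ ∀ i, e (u i) = v i := by
  have fiber (c : γ) : ∃ e : {a // f a = c} ≃ {b // g b = c},
      ∀ i : {i // f (u i) = c}, e ⟨u i, i.2⟩ = ⟨v i, (huv i).trans i.2⟩ :=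
    exists_equiv_apply_eq_of_injective (hcard c)
      (fun i j hij => Subtype.ext (hu (congrArg Subtype.val hij)))
      (fun i j hij => Subtype.ext (hv (congrArg Subtype.val hij)))
  choose e he using fiber
  refine ⟨Equiv.ofFiberEquiv e, Equiv.ofFiberEquiv_map e, fun i => ?_⟩
  exact congrArg Subtype.val (he (f (u i)) ⟨i, rfl⟩)

section Graft

variable {n t : ℕ}

def graft (a : Fin n → Bool) (η : Fin t → Bool) : Fin t → Bool :=
  fun i => if hi : (i : ℕ) < n then a ⟨i, hi⟩ else η i

theorem resLE_graft (hnt : n ≤ t) (a : Fin n → Bool) (η : Fin t → Bool) :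
    resLE hnt (graft a η) = a := by
  funext i
  simp [resLE, graft]

theorem graft_graft (a b : Fin n → Bool) (η : Fin t → Bool) :
    graft a (graft b η) = graft a η := by
  funext i
  by_cases hi : (i : ℕ) < n <;> simp [graft, hi]

theorem graft_resLE_self (hnt : n ≤ t) (η : Fin t → Bool) : graft (resLE hnt η) η = η := by
  funext i
  by_cases hi : (i : ℕ) < n <;> simp [graft, resLE, hi]

def resLEFiberEquiv (hnt : n ≤ t) (a a' : Fin n → Bool) :
    {η // resLE hnt η = a} ≃ {η // resLE hnt η = a'} where
  toFun η := ⟨graft a' η, resLE_graft hnt a' η⟩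
  invFun η := ⟨graft a η, resLE_graft hnt a η⟩
  left_inv := fun ⟨η, hη⟩ => Subtype.ext <| by
    simp only [graft_graft, ← hη, graft_resLE_self]
  right_inv := fun ⟨η, hη⟩ => Subtype.ext <| by
    simp only [graft_graft, ← hη, graft_resLE_self]

end Graft

theorem stmt_11_general (D : Set (ℕ → Bool))
    (h : (ℕ → Bool) → (ℕ → Bool)) (hinj : Set.InjOn h D)
    (n t : ℕ) (hnt : n ≤ t) (π : Equiv.Perm (Fin n → Bool))
    (hcomp : ∀ x ∈ D, res n (h x) = π (res n x))
    (k : ℕ) (ξ ζ : Fin k → (Fin t → Bool))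
    (hξ : Function.Injective ξ) (hζ : Function.Injective ζ)
    (hπξζ : ∀ i : Fin k, π (resLE hnt (ξ i)) = resLE hnt (ζ i))
    (hDξ : ∀ x ∈ D, ∀ i : Fin k, res t x ≠ ξ i)
    (hDζ : ∀ x ∈ D, ∀ i : Fin k, res t (h x) ≠ ζ i)
    (hDt : Set.InjOn (res t) D)
    (hhDt : Set.InjOn (res t) (h '' D)) :
    ∃ π' : Equiv.Perm (Fin t → Bool),
      (∀ η : Fin t → Bool, resLE hnt (π' η) = π (resLE hnt η)) ∧
      (∀ x ∈ D, π' (res t x) = res t (h x)) ∧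
      (∀ i : Fin k, π' (ξ i) = ζ i) := by
  let u : D ⊕ Fin k → (Fin t → Bool) := Sum.elim (fun x => res t x) ξ
  let v : D ⊕ Fin k → (Fin t → Bool) := Sum.elim (fun x => res t (h x)) ζ
  have hu : Injective u := hDt.injective.sumElim hξ fun x i => hDξ x x.2 i
  have hv : Injective v :=
    (hhDt.comp hinj (Set.mapsTo_image h D)).injective.sumElim hζ fun x i => hDζ x x.2 i
  have huv : ∀ j, resLE hnt (v j) = π (resLE hnt (u j))
    | .inl x => hcomp x x.2
    | .inr i => (hπξζ i).symm
  have hcard (c : Fin n → Bool) :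
      Nat.card {η // π (resLE hnt η) = c} = Nat.card {η // resLE hnt η = c} :=
    Nat.card_congr <| (Equiv.subtypeEquivRight fun _ => (π.eq_symm_apply).symm).trans
      (resLEFiberEquiv hnt _ c)
  obtain ⟨π', hfib, hext⟩ := exists_equiv_fiberwise_apply_eq hcard hu hv huv
  exact ⟨π', hfib, fun x hx => hext (.inl ⟨x, hx⟩), fun i => hext (.inr i)⟩

theorem stmt_11 (D : Set (ℕ → Bool)) (hDfin : D.Finite)
    (h : (ℕ → Bool) → (ℕ → Bool)) (hinj : Set.InjOn h D)
    (n t : ℕ) (hnt : n ≤ t) (π : Equiv.Perm (Fin n → Bool))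
    (hcomp : ∀ x ∈ D, res n (h x) = π (res n x))
    (k : ℕ) (ξ ζ : Fin k → (Fin t → Bool))
    (hξ : Function.Injective ξ) (hζ : Function.Injective ζ)
    (hπξζ : ∀ i : Fin k, π (resLE hnt (ξ i)) = resLE hnt (ζ i))
    (hDξ : ∀ x ∈ D, ∀ i : Fin k, res t x ≠ ξ i)
    (hDζ : ∀ x ∈ D, ∀ i : Fin k, res t (h x) ≠ ζ i)
    (hDt : Set.InjOn (res t) D)
    (hhDt : Set.InjOn (res t) (h '' D)) :
    ∃ π' : Equiv.Perm (Fin t → Bool),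
      (∀ η : Fin t → Bool, resLE hnt (π' η) = π (resLE hnt η)) ∧
      (∀ x ∈ D, π' (res t x) = res t (h x)) ∧
      (∀ i : Fin k, π' (ξ i) = ζ i) :=
  stmt_11_general D h hinj n t hnt π hcomp k ξ ζ hξ hζ hπξζ hDξ hDζ hDt hhDt
end

section
/- Assume the index set Γ is infinite and that for every ξ ∈ Γ the graph {(x, h_ξ(x)) : x ∈ D_ξ} is dense in 2^ω × 2^ω. Then for every finite binary sequence η the set S_η = {(n, π, h) ∈ Q_h̄ : dom(h) ∩ [η] ≠ ∅} is dense in the poset (Q_h̄, ≤), and the set S^η = {(n, π, h) ∈ Q_h̄ : ran(h) ∩ [η] ≠ ∅} is dense in (Q_h̄, ≤) (a subset S of a poset P is dense if every p ∈ P has an extension q ≤ p with q ∈ S). -/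
/-- The basic clopen cylinder `[η] = {x ∈ 2^ω : x↾n = η}` determined by `η ∈ 2^n`. -/
def cyl {n : ℕ} (η : Fin n → Bool) : Set (ℕ → Bool) := {x | res n x = η}

/-- A condition `p = (n, π, h)` of the forcing poset `Q_h̄`, where the family
`h̄ = ⟨h_ξ : ξ ∈ Γ⟩` is given by the domains `Dom ξ ⊆ 2^ω` and (total extensions of)
the functions `hbar ξ`.  The finite partial function `h` is represented by its
graph, a finite set of pairs. -/
structure QCond {Γ : Type*} (Dom : Γ → Set (ℕ → Bool))
    (hbar : Γ → (ℕ → Bool) → (ℕ → Bool)) where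
  /-- the natural number `n` -/
  n : ℕ
  /-- the permutation `π` of `2^n` -/
  perm : Equiv.Perm (Fin n → Bool)
  /-- the graph of the finite partial function `h` -/
  graph : Set ((ℕ → Bool) × (ℕ → Bool))
  /-- `h` is a finite partial function -/
  graph_finite : graph.Finite
  /-- `h` is a function (single-valued) -/
  graph_fun : ∀ z ∈ graph, ∀ w ∈ graph, z.1 = w.1 → z = w
  /-- the domain of `h` is contained in `∪_ξ D_ξ` -/
  dom_sub : ∀ z ∈ graph, ∃ ξ, z.1 ∈ Dom ξ
  /-- `|dom h ∩ D_ξ| ≤ 1` for every `ξ` -/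
  dom_once : ∀ ξ, ∀ z ∈ graph, ∀ w ∈ graph, z.1 ∈ Dom ξ → w.1 ∈ Dom ξ → z = w
  /-- if `x ∈ dom h ∩ D_ξ` then `h x = h_ξ x` -/
  val_eq : ∀ z ∈ graph, ∀ ξ, z.1 ∈ Dom ξ → z.2 = hbar ξ z.1
  /-- if `x ∈ dom h` then `(h x)↾n = π (x↾n)` -/
  proj : ∀ z ∈ graph, res n z.2 = perm (res n z.1)

/-- The order on `Q_h̄`: `q ≤ p` iff `p.n ≤ q.n`, the partial function of `q`
extends that of `p`, and the permutation of `q` projects onto that of `p`. -/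
def QLe {Γ : Type*} {Dom : Γ → Set (ℕ → Bool)} {hbar : Γ → (ℕ → Bool) → (ℕ → Bool)}
    (q p : QCond Dom hbar) : Prop :=
  ∃ hn : p.n ≤ q.n, p.graph ⊆ q.graph ∧
    ∀ η : Fin q.n → Bool,
      (fun i : Fin p.n => q.perm η (Fin.castLE hn i)) =
        p.perm (fun i : Fin p.n => η (Fin.castLE hn i))

/-- `p̂ = ∪_{η ∈ 2^n} [η] × [π η] ⊆ 2^ω × 2^ω`. -/
def Qhat {Γ : Type*} {Dom : Γ → Set (ℕ → Bool)} {hbar : Γ → (ℕ → Bool) → (ℕ → Bool)}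
    (p : QCond Dom hbar) : Set ((ℕ → Bool) × (ℕ → Bool)) :=
  ⋃ η : Fin p.n → Bool, cyl η ×ˢ cyl (p.perm η)

/-!
A fresh index `ξ ∈ Γ` exists because the finitely many points of `dom h` lie in at most
finitely many of the pairwise disjoint sets `D_ξ`. The set `p̂` is open and projects onto
both factors of `2^ω × 2^ω`, so it meets the open sets `[η] × 2^ω` and `2^ω × [η]`; density of
the graph of `h_ξ` yields `x ∈ D_ξ` with `(x, h_ξ x)` in that intersection, and lying in `p̂` is
exactly what is needed to add `x ↦ h_ξ x` to `h` without changing `n` and `π`.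
-/

lemma continuous_res (n : ℕ) : Continuous (res n) :=
  continuous_pi fun i : Fin n => continuous_apply (i : ℕ)

lemma isOpen_cyl {n : ℕ} (σ : Fin n → Bool) : IsOpen (cyl σ) :=
  (continuous_res n).isOpen_preimage {σ} (isOpen_discrete _)

lemma cyl_nonempty {n : ℕ} (σ : Fin n → Bool) : (cyl σ).Nonempty :=
  ⟨fun i => if h : i < n then σ ⟨i, h⟩ else false, funext fun i => by simp [res]⟩

lemma Pairwise.eq_of_mem_of_mem {ι α : Type*} {D : ι → Set α}
    (hdisj : Pairwise fun i j => Disjoint (D i) (D j)) {i j : ι} {x : α}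
    (hi : x ∈ D i) (hj : x ∈ D j) : i = j := by
  by_contra hne
  exact Set.disjoint_left.mp (hdisj hne) hi hj

namespace QCond

variable {Γ : Type*} {Dom : Γ → Set (ℕ → Bool)} {hbar : Γ → (ℕ → Bool) → (ℕ → Bool)}

lemma mem_Qhat_iff (p : QCond Dom hbar) (z : (ℕ → Bool) × (ℕ → Bool)) :
    z ∈ Qhat p ↔ res p.n z.2 = p.perm (res p.n z.1) := by
  simp only [Qhat, Set.mem_iUnion, Set.mem_prod, cyl, Set.mem_ofPred_eq]
  exact ⟨fun ⟨_, h₁, h₂⟩ => h₁ ▸ h₂, fun h => ⟨_, rfl, h⟩⟩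

lemma isOpen_Qhat (p : QCond Dom hbar) : IsOpen (Qhat p) :=
  isOpen_iUnion fun σ => (isOpen_cyl σ).prod (isOpen_cyl _)

lemma exists_mk_mem_Qhat_left (p : QCond Dom hbar) (x : ℕ → Bool) : ∃ y, (x, y) ∈ Qhat p := by
  obtain ⟨y, hy⟩ := cyl_nonempty (p.perm (res p.n x))
  exact ⟨y, (p.mem_Qhat_iff _).2 hy⟩

lemma exists_mk_mem_Qhat_right (p : QCond Dom hbar) (y : ℕ → Bool) : ∃ x, (x, y) ∈ Qhat p := by
  obtain ⟨x, hx⟩ := cyl_nonempty (p.perm.symm (res p.n y))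
  refine ⟨x, (p.mem_Qhat_iff _).2 ?_⟩
  simp only [show res p.n x = _ from hx, Equiv.apply_symm_apply]

lemma exists_forall_notMem_dom [Infinite Γ]
    (hdisjD : Pairwise fun ξ η => Disjoint (Dom ξ) (Dom η)) (p : QCond Dom hbar) :
    ∃ ξ, ∀ z ∈ p.graph, z.1 ∉ Dom ξ := by
  have hused : {ξ | ∃ z ∈ p.graph, z.1 ∈ Dom ξ}.Finite := by
    have h : {ξ | ∃ z ∈ p.graph, z.1 ∈ Dom ξ} = ⋃ z ∈ p.graph, {ξ | z.1 ∈ Dom ξ} := by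
      ext; simp
    rw [h]
    exact p.graph_finite.biUnion fun z _ =>
      Set.Subsingleton.finite fun ξ hξ ζ hζ => hdisjD.eq_of_mem_of_mem hξ hζ
  obtain ⟨ξ, hξ⟩ := hused.infinite_compl.nonempty
  exact ⟨ξ, fun z hz hmem => hξ ⟨z, hz, hmem⟩⟩

/-- The condition `(n, π, h ∪ {(x, h_ξ x)})`, for `ξ` not yet used by `h`. -/
def insertPair (hdisjD : Pairwise fun ξ η => Disjoint (Dom ξ) (Dom η))
    (p : QCond Dom hbar) {ξ : Γ} {x : ℕ → Bool} (hx : x ∈ Dom ξ)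
    (hfresh : ∀ z ∈ p.graph, z.1 ∉ Dom ξ) (hmem : (x, hbar ξ x) ∈ Qhat p) :
    QCond Dom hbar where
  n := p.n
  perm := p.perm
  graph := insert (x, hbar ξ x) p.graph
  graph_finite := p.graph_finite.insert _
  graph_fun := by
    rintro z (rfl | hz) w (rfl | hw) hzw
    · rfl
    · exact absurd (hzw ▸ hx) (hfresh w hw)
    · exact absurd (hzw ▸ hx) (hfresh z hz)
    · exact p.graph_fun z hz w hw hzw
  dom_sub := by
    rintro z (rfl | hz)
    · exact ⟨ξ, hx⟩
    · exact p.dom_sub z hz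
  dom_once := by
    have huniq : ∀ ζ, x ∈ Dom ζ → ζ = ξ := fun ζ hζ => hdisjD.eq_of_mem_of_mem hζ hx
    rintro ζ z (rfl | hz) w (rfl | hw) hzd hwd
    · rfl
    · exact absurd (huniq ζ hzd ▸ hwd) (hfresh w hw)
    · exact absurd (huniq ζ hwd ▸ hzd) (hfresh z hz)
    · exact p.dom_once ζ z hz w hw hzd hwd
  val_eq := by
    rintro z (rfl | hz) ζ hzd
    · rw [hdisjD.eq_of_mem_of_mem hzd hx]
    · exact p.val_eq z hz ζ hzd
  proj := by
    rintro z (rfl | hz)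
    · exact (p.mem_Qhat_iff _).1 hmem
    · exact p.proj z hz

lemma insertPair_le (hdisjD : Pairwise fun ξ η => Disjoint (Dom ξ) (Dom η))
    (p : QCond Dom hbar) {ξ : Γ} {x : ℕ → Bool} (hx : x ∈ Dom ξ)
    (hfresh : ∀ z ∈ p.graph, z.1 ∉ Dom ξ) (hmem : (x, hbar ξ x) ∈ Qhat p) :
    QLe (p.insertPair hdisjD hx hfresh hmem) p :=
  ⟨le_rfl, Set.subset_insert _ _, fun _ => rfl⟩

lemma mem_graph_insertPair (hdisjD : Pairwise fun ξ η => Disjoint (Dom ξ) (Dom η))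
    (p : QCond Dom hbar) {ξ : Γ} {x : ℕ → Bool} (hx : x ∈ Dom ξ)
    (hfresh : ∀ z ∈ p.graph, z.1 ∉ Dom ξ) (hmem : (x, hbar ξ x) ∈ Qhat p) :
    (x, hbar ξ x) ∈ (p.insertPair hdisjD hx hfresh hmem).graph :=
  Set.mem_insert _ _

lemma exists_le_exists_mem_graph_mem [Infinite Γ]
    (hdisjD : Pairwise fun ξ η => Disjoint (Dom ξ) (Dom η))
    (hdense : ∀ ξ, Dense {z : (ℕ → Bool) × (ℕ → Bool) | z.1 ∈ Dom ξ ∧ z.2 = hbar ξ z.1})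
    (p : QCond Dom hbar) {U : Set ((ℕ → Bool) × (ℕ → Bool))} (hU : IsOpen U)
    (hpU : (Qhat p ∩ U).Nonempty) :
    ∃ q : QCond Dom hbar, QLe q p ∧ ∃ z ∈ q.graph, z ∈ U := by
  obtain ⟨ξ, hfresh⟩ := p.exists_forall_notMem_dom hdisjD
  obtain ⟨⟨x, y⟩, ⟨hmem, hxU⟩, hx, hy⟩ :=
    (hdense ξ).inter_open_nonempty _ (p.isOpen_Qhat.inter hU) hpU
  obtain rfl : y = hbar ξ x := hy
  exact ⟨_, p.insertPair_le hdisjD hx hfresh hmem, _,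
    p.mem_graph_insertPair hdisjD hx hfresh hmem, hxU⟩

end QCond

theorem stmt_14_general {Γ : Type*} [Infinite Γ]
    (Dom : Γ → Set (ℕ → Bool)) (hbar : Γ → (ℕ → Bool) → (ℕ → Bool))
    (hdisjD : Pairwise fun ξ η => Disjoint (Dom ξ) (Dom η))
    -- the graph of each `h_ξ` is dense in `2^ω × 2^ω`
    (hdense : ∀ ξ, Dense {z : (ℕ → Bool) × (ℕ → Bool) | z.1 ∈ Dom ξ ∧ z.2 = hbar ξ z.1})
    {k : ℕ} (η : Fin k → Bool) :
    -- `S_η = {(n, π, h) : dom h ∩ [η] ≠ ∅}` is dense in the poset `(Q_h̄, ≤)`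
    (∀ p : QCond Dom hbar, ∃ q : QCond Dom hbar, QLe q p ∧ ∃ z ∈ q.graph, z.1 ∈ cyl η) ∧
    -- `S^η = {(n, π, h) : ran h ∩ [η] ≠ ∅}` is dense in the poset `(Q_h̄, ≤)`
    (∀ p : QCond Dom hbar, ∃ q : QCond Dom hbar, QLe q p ∧ ∃ z ∈ q.graph, z.2 ∈ cyl η) := by
  obtain ⟨x₀, hx₀⟩ := cyl_nonempty η
  constructor
  · intro p
    obtain ⟨y, hy⟩ := p.exists_mk_mem_Qhat_left x₀
    obtain ⟨q, hqp, z, hz, hzU, -⟩ := p.exists_le_exists_mem_graph_mem hdisjD hdense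
      ((isOpen_cyl η).prod isOpen_univ) ⟨(x₀, y), hy, hx₀, trivial⟩
    exact ⟨q, hqp, z, hz, hzU⟩
  · intro p
    obtain ⟨x, hx⟩ := p.exists_mk_mem_Qhat_right x₀
    obtain ⟨q, hqp, z, hz, -, hzU⟩ := p.exists_le_exists_mem_graph_mem hdisjD hdense
      (isOpen_univ.prod (isOpen_cyl η)) ⟨(x, x₀), hx, trivial, hx₀⟩
    exact ⟨q, hqp, z, hz, hzU⟩

theorem stmt_14 {Γ : Type*} [Infinite Γ]
    (Dom : Γ → Set (ℕ → Bool)) (hbar : Γ → (ℕ → Bool) → (ℕ → Bool))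
    (hcount : ∀ ξ, (Dom ξ).Countable)
    (hdisjD : Pairwise fun ξ η => Disjoint (Dom ξ) (Dom η))
    (hdisjR : Pairwise fun ξ η => Disjoint (hbar ξ '' Dom ξ) (hbar η '' Dom η))
    -- the graph of each `h_ξ` is dense in `2^ω × 2^ω`
    (hdense : ∀ ξ, Dense {z : (ℕ → Bool) × (ℕ → Bool) | z.1 ∈ Dom ξ ∧ z.2 = hbar ξ z.1})
    {k : ℕ} (η : Fin k → Bool) :
    -- `S_η = {(n, π, h) : dom h ∩ [η] ≠ ∅}` is dense in the poset `(Q_h̄, ≤)`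
    (∀ p : QCond Dom hbar, ∃ q : QCond Dom hbar, QLe q p ∧ ∃ z ∈ q.graph, z.1 ∈ cyl η) ∧
    -- `S^η = {(n, π, h) : ran h ∩ [η] ≠ ∅}` is dense in the poset `(Q_h̄, ≤)`
    (∀ p : QCond Dom hbar, ∃ q : QCond Dom hbar, QLe q p ∧ ∃ z ∈ q.graph, z.2 ∈ cyl η) :=
  stmt_14_general Dom hbar hdisjD hdense η
end
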